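/- arXiv:2101.00092 — 3 statements merged into one kernel-verified Lean document; each statement's English description precedes it below -/
import Mathlib

section
/- Let X be a set, B₁, B₂ : X → X operators, y ∈ X, and F(X) a nonempty family of membership functions X → [0,1] with F(y) ≠ 0 and F(B₂(y)) ≠ 0 for all F ∈ F(X). If the fuzzy rates ‖B₁‖_{B₂(y)} and ‖B₂‖_y exist (are finite), then ‖B₁∘B₂‖_y ≤ ‖B₁‖_{B₂(y)} · ‖B₂‖_y. -/
open Set

theorem setOf_exists_mem_eq_image {α β : Type*} (s : Set α) (f : α → β) :
    {x | ∃ a ∈ s, x = f a} = f '' s := by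
  ext
  simp [eq_comm]

theorem Real.sSup_image_mul_le {ι : Type*} {s : Set ι} {f g : ι → ℝ}
    (hf : ∀ i ∈ s, 0 ≤ f i) (hg : ∀ i ∈ s, 0 ≤ g i)
    (hf_bdd : BddAbove (f '' s)) (hg_bdd : BddAbove (g '' s)) :
    sSup ((fun i ↦ f i * g i) '' s) ≤ sSup (f '' s) * sSup (g '' s) := by
  have hf_sup : 0 ≤ sSup (f '' s) := Real.sSup_nonneg (forall_mem_image.2 hf)
  have hg_sup : 0 ≤ sSup (g '' s) := Real.sSup_nonneg (forall_mem_image.2 hg)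
  refine Real.sSup_le (forall_mem_image.2 fun i hi ↦ ?_) (mul_nonneg hf_sup hg_sup)
  exact mul_le_mul (le_csSup hf_bdd (mem_image_of_mem f hi))
    (le_csSup hg_bdd (mem_image_of_mem g hi)) (hg i hi) hf_sup

theorem fuzzy_rate_comp_general {X : Type*} (B₁ B₂ : X → X) (y : X)
    (𝓕 : Set (X → ℝ))
    (hmem : ∀ F ∈ 𝓕, ∀ x, F x ∈ Icc (0 : ℝ) 1)
    (hB2y : ∀ F ∈ 𝓕, 0 < F (B₂ y))
    (hbdd1 : BddAbove {x : ℝ | ∃ F ∈ 𝓕, x = F (B₁ (B₂ y)) / F (B₂ y)})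
    (hbdd2 : BddAbove {x : ℝ | ∃ F ∈ 𝓕, x = F (B₂ y) / F y}) :
    sSup {x : ℝ | ∃ F ∈ 𝓕, x = F ((B₁ ∘ B₂) y) / F y} ≤
      sSup {x : ℝ | ∃ F ∈ 𝓕, x = F (B₁ (B₂ y)) / F (B₂ y)} *
        sSup {x : ℝ | ∃ F ∈ 𝓕, x = F (B₂ y) / F y} := by
  have hratio : EqOn (fun F : X → ℝ ↦ F ((B₁ ∘ B₂) y) / F y)
      (fun F ↦ F (B₁ (B₂ y)) / F (B₂ y) * (F (B₂ y) / F y)) 𝓕 :=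
    fun F hF ↦ (div_mul_div_cancel₀ (hB2y F hF).ne').symm
  have hnonneg : ∀ F ∈ 𝓕, ∀ x x', 0 ≤ F x / F x' :=
    fun F hF x x' ↦ div_nonneg (hmem F hF x).1 (hmem F hF x').1
  simp only [setOf_exists_mem_eq_image] at hbdd1 hbdd2 ⊢
  rw [image_congr hratio]
  exact Real.sSup_image_mul_le (fun F hF ↦ hnonneg F hF _ _) (fun F hF ↦ hnonneg F hF _ _)
    hbdd1 hbdd2

/-- ‖B₁ ∘ B₂‖_y ≤ ‖B₁‖_{B₂ y} · ‖B₂‖_y. -/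
theorem fuzzy_rate_comp {X : Type*} (B₁ B₂ : X → X) (y : X)
    (𝓕 : Set (X → ℝ)) (h𝓕 : 𝓕.Nonempty)
    (hmem : ∀ F ∈ 𝓕, ∀ x, F x ∈ Icc (0 : ℝ) 1)
    (hy : ∀ F ∈ 𝓕, 0 < F y) (hB2y : ∀ F ∈ 𝓕, 0 < F (B₂ y))
    (hbdd1 : BddAbove {x : ℝ | ∃ F ∈ 𝓕, x = F (B₁ (B₂ y)) / F (B₂ y)})
    (hbdd2 : BddAbove {x : ℝ | ∃ F ∈ 𝓕, x = F (B₂ y) / F y}) :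
    sSup {x : ℝ | ∃ F ∈ 𝓕, x = F ((B₁ ∘ B₂) y) / F y} ≤
      sSup {x : ℝ | ∃ F ∈ 𝓕, x = F (B₁ (B₂ y)) / F (B₂ y)} *
        sSup {x : ℝ | ∃ F ∈ 𝓕, x = F (B₂ y) / F y} :=
  fuzzy_rate_comp_general B₁ B₂ y 𝓕 hmem hB2y hbdd1 hbdd2
end

section
/- Let U = ℝ × ℝ and let b be a real number with |b| ≥ 1. For μ, r > 0 define the membership function F_{(μ,r)} : U → [0,1] by F_{(μ,r)}(x,y) = exp(−(λ−μ)²) if x² + λy² = r² for some λ > 0 (with value 1 when λ = μ), and F_{(μ,r)}(x,y) = 0 otherwise. Let B(x,y) = (x, b·y). Then the fuzzy rate of B at the point (0, r) over the family {F_{(μ,r)} : μ > 0} (with r fixed) equals exp(1 − 1/b⁴): sup_{μ>0} F_{(μ,r)}(B(0,r)) / F_{(μ,r)}((0,r)) = e^{1 − 1/b⁴}. -/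
open Real
open scoped Classical

/-- Membership function of Example 2.1: F_{(μ,r)}(x,y) = exp(−(λ−μ)²) if
x² + λy² = r² for some λ > 0, and 0 otherwise. -/
noncomputable def memF (μ r : ℝ) (p : ℝ × ℝ) : ℝ :=
  if h : ∃ l : ℝ, 0 < l ∧ p.1 ^ 2 + l * p.2 ^ 2 = r ^ 2 then
    Real.exp (-(Classical.choose h - μ) ^ 2)
  else 0

/-!
On the axis `x = 0` the level parameter is `λ = r² / y²`, so `(0, r)` has `λ = 1` and its image
`(0, b r)` has `λ = c := 1 / b²`. The ratio of memberships is therefore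
`exp ((1 - μ)² - (c - μ)²) = exp (1 - c² - 2 μ (1 - c))`, which for `c ≤ 1` decreases in `μ`;
its supremum over `μ > 0` is the limit `exp (1 - c²)` as `μ → 0⁺`.
-/

open Set Filter Topology

lemma memF_zero_fst (μ : ℝ) {r y : ℝ} (hr : r ≠ 0) (hy : y ≠ 0) :
    memF μ r (0, y) = exp (-(r ^ 2 / y ^ 2 - μ) ^ 2) := by
  have hex : ∃ l : ℝ, 0 < l ∧ (0 : ℝ) ^ 2 + l * y ^ 2 = r ^ 2 :=
    ⟨r ^ 2 / y ^ 2, by positivity, by field_simp; ring⟩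
  have hlevel : Classical.choose hex = r ^ 2 / y ^ 2 := by
    rw [eq_div_iff (pow_ne_zero 2 hy)]
    simpa using (Classical.choose_spec hex).2
  rw [memF, dif_pos hex, hlevel]

lemma memF_mul_div_memF (μ : ℝ) {b r : ℝ} (hb : b ≠ 0) (hr : r ≠ 0) :
    memF μ r (0, b * r) / memF μ r (0, r) = exp ((1 - μ) ^ 2 - (1 / b ^ 2 - μ) ^ 2) := by
  rw [memF_zero_fst μ hr (mul_ne_zero hb hr), memF_zero_fst μ hr hr, ← exp_sub]
  congr 1
  field_simp
  ring

lemma antitone_exp_sq_sub_sq {c : ℝ} (hc : c ≤ 1) :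
    Antitone fun μ : ℝ ↦ exp ((1 - μ) ^ 2 - (c - μ) ^ 2) := by
  intro μ ν hμν
  exact exp_le_exp.2 (by nlinarith)

lemma sSup_image_Ioi_eq_of_antitoneOn {f : ℝ → ℝ} {a : ℝ} (hf : AntitoneOn f (Ici a))
    (hcont : ContinuousWithinAt f (Ioi a) a) : sSup (f '' Ioi a) = f a := by
  refine csSup_eq_of_forall_le_of_forall_lt_exists_gt (nonempty_Ioi.image f) ?_ ?_
  · rintro _ ⟨μ, hμ, rfl⟩
    exact hf self_mem_Ici (mem_Ici.2 hμ.le) hμ.le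
  · intro w hw
    obtain ⟨μ, hμ, hwμ⟩ :=
      (eventually_mem_nhdsWithin.and (hcont.tendsto.eventually (eventually_gt_nhds hw))).exists
    exact ⟨f μ, mem_image_of_mem f hμ, hwμ⟩

/-- for |b| ≥ 1, the fuzzy rate of B(x,y) = (x, by) at (0,r) over
the family {F_{(μ,r)} : μ > 0} equals e^{1 − 1/b⁴}. -/
theorem fuzzy_rate_example_ge_one (b r : ℝ) (hb : 1 ≤ |b|) (hr : 0 < r) :
    sSup {x : ℝ | ∃ μ > 0,
        x = memF μ r (0, b * r) / memF μ r (0, r)} =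
      Real.exp (1 - 1 / b ^ 4) := by
  have hb0 : b ≠ 0 := by rintro rfl; norm_num at hb
  have hc : 1 / b ^ 2 ≤ 1 :=
    (div_le_one (by positivity)).2 ((one_le_sq_iff_one_le_abs b).2 hb)
  have hset : {x : ℝ | ∃ μ > 0, x = memF μ r (0, b * r) / memF μ r (0, r)} =
      (fun μ : ℝ ↦ exp ((1 - μ) ^ 2 - (1 / b ^ 2 - μ) ^ 2)) '' Ioi 0 := by
    ext x
    simp [memF_mul_div_memF _ hb0 hr.ne', eq_comm]
  rw [hset, sSup_image_Ioi_eq_of_antitoneOn ((antitone_exp_sq_sub_sq hc).antitoneOn _)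
    (by fun_prop)]
  congr 1
  field_simp
  ring
end

section
/- Let U = ℝ × ℝ and b a real number with 0 < |b| < 1. With the family of membership functions F_{(μ,r)} (μ > 0, r fixed) defined by F_{(μ,r)}(x,y) = exp(−(λ−μ)²) when x² + λy² = r² for some λ > 0 and 0 otherwise, and B(x,y) = (x, b·y), the fuzzy rate of B at (0,r) is infinite: sup_{μ>0} F_{(μ,r)}(B(0,r)) / F_{(μ,r)}((0,r)) = sup_{μ>0} e^{(1 − 1/b⁴)} e^{2μ(1/b² − 1)} = +∞. -/
open Real
open scoped Classical

lemma memF_eval (μ r y : ℝ) (hy : y ≠ 0) (l : ℝ) (hl : 0 < l)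
    (he : l * y ^ 2 = r ^ 2) : memF μ r (0, y) = Real.exp (-(l - μ) ^ 2) := by
  have hex : ∃ l' : ℝ, 0 < l' ∧ ((0:ℝ), y).1 ^ 2 + l' * ((0:ℝ), y).2 ^ 2 = r ^ 2 :=
    ⟨l, hl, by simpa using he⟩
  rw [memF, dif_pos hex]
  obtain ⟨h1, h2⟩ := Classical.choose_spec hex
  have hy2 : y ^ 2 ≠ 0 := pow_ne_zero _ hy
  have hcl : Classical.choose hex = l := by
    have : Classical.choose hex * y ^ 2 = l * y ^ 2 := by
      simpa [he] using h2
    exact mul_right_cancel₀ hy2 this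
  rw [hcl]

/-- for 0 < |b| < 1, the fuzzy rate of B(x,y) = (x, by) at (0,r)
over the family {F_{(μ,r)} : μ > 0} is +∞ (the supremum in `EReal` is ⊤), the
ratios being e^{(1 − 1/b⁴)} e^{2μ(1/b² − 1)}. -/
theorem fuzzy_rate_example_lt_one (b r : ℝ) (hb0 : b ≠ 0) (hb : |b| < 1) (hr : 0 < r) :
    (∀ μ > (0:ℝ), memF μ r (0, b * r) / memF μ r (0, r) =
        Real.exp (1 - 1 / b ^ 4) * Real.exp (2 * μ * (1 / b ^ 2 - 1))) ∧
    sSup {x : EReal | ∃ μ > (0:ℝ),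
        x = ((memF μ r (0, b * r) / memF μ r (0, r) : ℝ) : EReal)} = ⊤ := by
  have hb2 : (0:ℝ) < b ^ 2 := by positivity
  have hb21 : b ^ 2 < 1 := by
    have := abs_lt.mp hb
    nlinarith
  have hratio : ∀ μ : ℝ, 0 < μ → memF μ r (0, b * r) / memF μ r (0, r) =
      Real.exp (1 - 1 / b ^ 4) * Real.exp (2 * μ * (1 / b ^ 2 - 1)) := by
    intro μ _
    have h1 : memF μ r (0, r) = Real.exp (-(1 - μ) ^ 2) :=
      memF_eval μ r r hr.ne' 1 one_pos (by ring)
    have h2 : memF μ r (0, b * r) = Real.exp (-(1 / b ^ 2 - μ) ^ 2) := by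
      refine memF_eval μ r (b * r) (by positivity) (1 / b ^ 2) (by positivity) ?_
      field_simp
    rw [h1, h2, ← Real.exp_sub, ← Real.exp_add]
    congr 1
    field_simp
    ring
  refine ⟨fun μ hμ => hratio μ hμ, ?_⟩
  rw [sSup_eq_top]
  intro x hx
  have key : ∀ m : ℝ, ∃ μ > (0:ℝ), m <
      memF μ r (0, b * r) / memF μ r (0, r) := by
    intro m
    set d : ℝ := 1 / b ^ 2 - 1 with hd
    have hdpos : 0 < d := by
      rw [hd]
      have : 1 < 1 / b ^ 2 := (one_lt_div hb2).mpr hb21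
      linarith
    set μ : ℝ := max 1 ((Real.log (max m 1) - (1 - 1 / b ^ 4) + 1) / (2 * d)) with hμ
    have hμpos : 0 < μ := lt_of_lt_of_le one_pos (le_max_left _ _)
    refine ⟨μ, hμpos, ?_⟩
    rw [hratio μ hμpos, ← Real.exp_add]
    have hm1 : (0:ℝ) < max m 1 := lt_of_lt_of_le one_pos (le_max_right _ _)
    have hμge : (Real.log (max m 1) - (1 - 1 / b ^ 4) + 1) / (2 * d) ≤ μ :=
      le_max_right _ _
    have h2d : 0 < 2 * d := by linarith
    have hexp : Real.log (max m 1) < 1 - 1 / b ^ 4 + 2 * μ * d := by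
      have := (div_le_iff₀ h2d).mp hμge
      nlinarith
    calc m ≤ max m 1 := le_max_left _ _
      _ = Real.exp (Real.log (max m 1)) := (Real.exp_log hm1).symm
      _ < Real.exp (1 - 1 / b ^ 4 + 2 * μ * (1 / b ^ 2 - 1)) := by
          apply Real.exp_lt_exp.mpr; exact hexp
  induction x using EReal.rec with
  | bot =>
      obtain ⟨μ, hμ, hlt⟩ := key 0
      exact ⟨_, ⟨μ, hμ, rfl⟩, EReal.bot_lt_coe _⟩
  | coe m =>
      obtain ⟨μ, hμ, hlt⟩ := key m
      exact ⟨_, ⟨μ, hμ, rfl⟩, EReal.coe_lt_coe_iff.mpr hlt⟩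
  | top => exact absurd hx (lt_irrefl _)
end
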